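/- There exists a constant c ≥ 1 depending only on p such that for all δ ≥ 0 and all t ≥ 0 one has φ(t) ≤ φ'(t)·t ≤ c·φ(t); in particular the equivalence φ'(t)·t ∼ φ(t) holds uniformly in t and δ. -/

import Mathlib

/-!
`φ'` is nondecreasing, so `φ(t) ≤ φ'(t)·t`. For the reverse inequality write
`(δ+s)^(p-2)·s = (δ+s)^(p-1)·(s/(δ+s))`: both factors are nondecreasing in `s`, and halving `t`
costs at most `2^(p-1)` in the first and `2` in the second, so `φ'(t) ≤ 2^p·φ'(t/2)`. Hence
`φ'(t)·t ≤ 2^(p+1)·(t/2)·φ'(t/2) ≤ 2^(p+1)·∫_{t/2}^t φ' ≤ 2^(p+1)·φ(t)`.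
-/

open intervalIntegral Set

namespace MonotoneOn

variable {f : ℝ → ℝ} {a b : ℝ}

theorem intervalIntegrable_of_Icc (hab : a ≤ b) (hf : MonotoneOn f (Icc a b)) :
    IntervalIntegrable f MeasureTheory.volume a b :=
  MonotoneOn.intervalIntegrable (by rwa [uIcc_of_le hab])

theorem intervalIntegral_le_mul_sub (hab : a ≤ b) (hf : MonotoneOn f (Icc a b)) :
    ∫ s in a..b, f s ≤ f b * (b - a) := by
  have h := integral_mono_on hab (hf.intervalIntegrable_of_Icc hab) intervalIntegrable_const
    fun x hx => hf hx (right_mem_Icc.2 hab) hx.2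
  rwa [integral_const, smul_eq_mul, mul_comm] at h

theorem mul_sub_le_intervalIntegral (hab : a ≤ b) (hf : MonotoneOn f (Icc a b)) :
    f a * (b - a) ≤ ∫ s in a..b, f s := by
  have h := integral_mono_on hab intervalIntegrable_const (hf.intervalIntegrable_of_Icc hab)
    fun x hx => hf (left_mem_Icc.2 hab) hx hx.1
  rwa [integral_const, smul_eq_mul, mul_comm] at h

theorem mul_le_mul_intervalIntegral_of_le_mul_half {t C : ℝ} (ht : 0 ≤ t) (hC : 0 ≤ C)
    (hf : MonotoneOn f (Icc 0 t)) (hf0 : 0 ≤ f 0) (hdouble : f t ≤ C * f (t / 2)) :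
    f t * t ≤ 2 * C * ∫ s in (0 : ℝ)..t, f s := by
  have hleft : MonotoneOn f (Icc 0 (t / 2)) := hf.mono (Icc_subset_Icc_right (by linarith))
  have hright : MonotoneOn f (Icc (t / 2) t) := hf.mono (Icc_subset_Icc_left (by linarith))
  have hleft_nonneg : 0 ≤ ∫ s in (0 : ℝ)..(t / 2), f s :=
    integral_nonneg (by linarith) fun x hx => hf0.trans (hleft (left_mem_Icc.2 (by linarith)) hx hx.1)
  have hsplit := integral_add_adjacent_intervals (hleft.intervalIntegrable_of_Icc (by linarith))
    (hright.intervalIntegrable_of_Icc (by linarith))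
  have hhalf := hright.mul_sub_le_intervalIntegral (by linarith)
  calc f t * t ≤ C * f (t / 2) * t := mul_le_mul_of_nonneg_right hdouble ht
    _ = 2 * C * (f (t / 2) * (t - t / 2)) := by ring
    _ ≤ 2 * C * ∫ s in (0 : ℝ)..t, f s := by
      gcongr
      linarith

end MonotoneOn

section PowerWeight

variable {p δ : ℝ}

theorem rpow_sub_two_mul_eq {a : ℝ} (ha : 0 < a) (s : ℝ) :
    a ^ (p - 2) * s = a ^ (p - 1) * (s / a) := by
  rw [show p - 2 = (p - 1) - 1 by ring, Real.rpow_sub_one ha.ne']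
  field_simp

theorem monotoneOn_rpow_sub_two_mul (hp : 1 ≤ p) (hδ : 0 ≤ δ) :
    MonotoneOn (fun s => (δ + s) ^ (p - 2) * s) (Ici 0) := by
  intro s (hs : 0 ≤ s) u _ hsu
  rcases hs.eq_or_lt with rfl | hs
  · simp only [mul_zero]
    positivity
  have ha : 0 < δ + s := by linarith
  have hb : 0 < δ + u := by linarith
  simp only [rpow_sub_two_mul_eq ha, rpow_sub_two_mul_eq hb]
  gcongr ?_ * ?_
  · exact Real.rpow_le_rpow ha.le (by linarith) (by linarith)
  · rw [div_le_div_iff₀ ha hb]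
    nlinarith

theorem rpow_sub_two_mul_le_two_rpow_mul_half (hp : 1 ≤ p) (hδ : 0 ≤ δ) {t : ℝ} (ht : 0 ≤ t) :
    (δ + t) ^ (p - 2) * t ≤ 2 ^ p * ((δ + t / 2) ^ (p - 2) * (t / 2)) := by
  rcases ht.eq_or_lt with rfl | ht
  · simp
  have hhalf : 0 < δ + t / 2 := by linarith
  have hfull : 0 < δ + t := by linarith
  rw [rpow_sub_two_mul_eq hfull, rpow_sub_two_mul_eq hhalf,
    show (2 : ℝ) ^ p = 2 ^ (p - 1) * 2 by rw [← Real.rpow_add_one two_ne_zero]; norm_num]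
  calc (δ + t) ^ (p - 1) * (t / (δ + t))
      ≤ (2 * (δ + t / 2)) ^ (p - 1) * (t / (δ + t / 2)) := by
        gcongr ?_ * ?_
        · exact Real.rpow_le_rpow hfull.le (by linarith) (by linarith)
        · exact div_le_div_of_nonneg_left ht.le hhalf (by linarith)
    _ = 2 ^ (p - 1) * 2 * ((δ + t / 2) ^ (p - 1) * (t / 2 / (δ + t / 2))) := by
        rw [Real.mul_rpow zero_le_two hhalf.le]
        ring

end PowerWeight

theorem stmt1 (p : ℝ) (hp : 1 < p) :
    ∃ c : ℝ, 1 ≤ c ∧ ∀ δ : ℝ, 0 ≤ δ → ∀ t : ℝ, 0 ≤ t →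
      (∫ s in (0:ℝ)..t, (δ + s) ^ (p - 2) * s) ≤ ((δ + t) ^ (p - 2) * t) * t ∧
      ((δ + t) ^ (p - 2) * t) * t ≤ c * ∫ s in (0:ℝ)..t, (δ + s) ^ (p - 2) * s := by
  refine ⟨2 * 2 ^ p, ?_, fun δ hδ t ht => ?_⟩
  · have : (1 : ℝ) ≤ 2 ^ p := Real.one_le_rpow one_le_two (by linarith)
    linarith
  have hmono : MonotoneOn (fun s => (δ + s) ^ (p - 2) * s) (Icc 0 t) :=
    (monotoneOn_rpow_sub_two_mul hp.le hδ).mono Icc_subset_Ici_self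
  constructor
  · simpa using hmono.intervalIntegral_le_mul_sub ht
  · exact hmono.mul_le_mul_intervalIntegral_of_le_mul_half ht (by positivity) (by simp)
      (rpow_sub_two_mul_le_two_rpow_mul_half hp.le hδ ht)
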